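/- arXiv:0902.4397 — 7 statements merged into one kernel-verified Lean document; each statement's English description precedes it below -/
import Mathlib

section
/- Let γ, p: ℝ → ℝⁿ be differentiable curves, ω(t) a skew-symmetric matrix for each t, and suppose γ̇ = -ωγ, (γ,γ) = 1, (γ,p) = 0 for all t, and that k := γ∧p satisfies k̇ = [k,ω]. Then ṗ = -ωp. (That is, the Lagrange multiplier λ in ṗ = -ωp + λγ vanishes.) -/
/-! Write `ṗ = -ωp + q`. For skew `ω` one has `[γ∧p, ω] = (-ωγ)∧p + γ∧(-ωp)`, so `k̇ = [k, ω]`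
forces `γ∧q = 0`, and differentiating `(γ, p) = 0` gives `(γ, q) = 0`. Applying `γ∧q` to `γ`
then yields `0 = (q, γ)γ - (γ, γ)q = -q`. -/

open Matrix

noncomputable def wedge {n : ℕ} (v w : Fin n → ℝ) : Matrix (Fin n) (Fin n) ℝ :=
  vecMulVec v w - vecMulVec w v

section Wedge

variable {n : ℕ}

lemma wedge_sub_right (v w u : Fin n → ℝ) : wedge v (w - u) = wedge v w - wedge v u := by
  simp only [wedge, vecMulVec_sub, sub_vecMulVec]; abel

lemma wedge_mulVec (v w u : Fin n → ℝ) : wedge v w *ᵥ u = (w ⬝ᵥ u) • v - (v ⬝ᵥ u) • w := by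
  simp only [wedge, sub_mulVec, vecMulVec_mulVec, op_smul_eq_smul]

lemma eq_zero_of_wedge_eq_zero {v w : Fin n → ℝ} (h : wedge v w = 0) (hv : v ⬝ᵥ v = 1)
    (hvw : v ⬝ᵥ w = 0) : w = 0 := by
  have := wedge_mulVec v w v
  rwa [h, zero_mulVec, dotProduct_comm, hvw, hv, zero_smul, one_smul, zero_sub, eq_comm,
    neg_eq_zero] at this

lemma dotProduct_mulVec_of_transpose_eq_neg {ω : Matrix (Fin n) (Fin n) ℝ} (hω : ωᵀ = -ω)
    (v w : Fin n → ℝ) : v ⬝ᵥ ω *ᵥ w = -(ω *ᵥ v ⬝ᵥ w) := by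
  rw [dotProduct_mulVec, ← mulVec_transpose, hω, neg_mulVec, neg_dotProduct]

lemma wedge_mul_sub_mul_wedge {ω : Matrix (Fin n) (Fin n) ℝ} (hω : ωᵀ = -ω) (v w : Fin n → ℝ) :
    wedge v w * ω - ω * wedge v w = wedge (-(ω *ᵥ v)) w + wedge v (-(ω *ᵥ w)) := by
  simp only [wedge, sub_mul, mul_sub, vecMulVec_mul, mul_vecMulVec, ← mulVec_transpose, hω,
    neg_mulVec, neg_vecMulVec, vecMulVec_neg]
  abel

lemma hasDerivAt_wedge_apply {γ p : ℝ → Fin n → ℝ} {γ' p' : Fin n → ℝ} {t : ℝ}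
    (hγ : ∀ i, HasDerivAt (fun s => γ s i) (γ' i) t)
    (hp : ∀ i, HasDerivAt (fun s => p s i) (p' i) t) (i j : Fin n) :
    HasDerivAt (fun s => wedge (γ s) (p s) i j) ((wedge γ' (p t) + wedge (γ t) p') i j) t := by
  refine (((hγ i).fun_mul (hp j)).fun_sub ((hp i).fun_mul (hγ j))).congr_deriv ?_
  simp only [wedge, Matrix.add_apply, Matrix.sub_apply, vecMulVec_apply]
  ring

end Wedge

lemma hasDerivAt_dotProduct {ι : Type*} [Fintype ι] {γ p : ℝ → ι → ℝ} {γ' p' : ι → ℝ} {t : ℝ}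
    (hγ : ∀ i, HasDerivAt (fun s => γ s i) (γ' i) t)
    (hp : ∀ i, HasDerivAt (fun s => p s i) (p' i) t) :
    HasDerivAt (fun s => γ s ⬝ᵥ p s) (γ' ⬝ᵥ p t + γ t ⬝ᵥ p') t := by
  refine (HasDerivAt.fun_sum fun i _ => (hγ i).fun_mul (hp i)).congr_deriv ?_
  simp only [dotProduct, Finset.sum_add_distrib]

theorem stmt3 {n : ℕ} (γ p p' : ℝ → Fin n → ℝ)
    (ω : ℝ → Matrix (Fin n) (Fin n) ℝ)
    (hskew : ∀ t, (ω t)ᵀ = -ω t)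
    (hγ : ∀ t i, HasDerivAt (fun s => γ s i) (-(ω t).mulVec (γ t) i) t)
    (hp : ∀ t i, HasDerivAt (fun s => p s i) (p' t i) t)
    (hγγ : ∀ t, γ t ⬝ᵥ γ t = 1)
    (hγp : ∀ t, γ t ⬝ᵥ p t = 0)
    (hk : ∀ t i j, HasDerivAt (fun s => wedge (γ s) (p s) i j)
      ((wedge (γ t) (p t) * ω t - ω t * wedge (γ t) (p t)) i j) t) :
    ∀ t, p' t = -(ω t).mulVec (p t) := by
  intro t
  have hwedge : wedge (γ t) (p' t - -(ω t *ᵥ p t)) = 0 := by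
    have hk' : wedge (-(ω t *ᵥ γ t)) (p t) + wedge (γ t) (p' t)
        = wedge (-(ω t *ᵥ γ t)) (p t) + wedge (γ t) (-(ω t *ᵥ p t)) := by
      rw [← wedge_mul_sub_mul_wedge (hskew t)]
      ext i j
      exact (hasDerivAt_wedge_apply (hγ t) (hp t) i j).unique (hk t i j)
    rw [wedge_sub_right, add_left_cancel hk', sub_self]
  have hdot : γ t ⬝ᵥ (p' t - -(ω t *ᵥ p t)) = 0 := by
    have hderiv : -(ω t *ᵥ γ t) ⬝ᵥ p t + γ t ⬝ᵥ p' t = 0 :=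
      (hasDerivAt_dotProduct (hγ t) (hp t)).unique <| by
        simpa only [hγp] using hasDerivAt_const t (0 : ℝ)
    rw [neg_dotProduct] at hderiv
    rw [dotProduct_sub, dotProduct_neg, dotProduct_mulVec_of_transpose_eq_neg (hskew t)]
    linarith
  exact sub_eq_zero.mp (eq_zero_of_wedge_eq_zero hwedge (hγγ t) hdot)
end

section
/- Let E₁,…,Eₙ be the standard basis of ℝⁿ and let I be the linear operator on skew-symmetric matrices defined by I(Eᵢ∧Eⱼ) = (aᵢaⱼD/(D - aᵢaⱼ)) Eᵢ∧Eⱼ for i < j, where 0 < aᵢaⱼ < D. Then for all γ, ξ ∈ ℝⁿ, I⁻¹(γ∧ξ) = (A⁻¹γ)∧(A⁻¹ξ) - (1/D) γ∧ξ, where A = diag(a₁,…,aₙ). -/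
/-!
`I` is diagonal in the basis `Eᵢ ∧ Eⱼ`, and the reciprocal of its eigenvalue `aᵢaⱼD/(D - aᵢaⱼ)`
is `1/(aᵢaⱼ) - 1/D`. Expanding `(A⁻¹γ) ∧ (A⁻¹ξ) - (1/D) γ ∧ ξ` in that basis gives the coefficient
`(1/(aᵢaⱼ) - 1/D) γᵢξⱼ` on `Eᵢ ∧ Eⱼ`, which `I` sends back to `γᵢξⱼ`, the coefficient of `γ ∧ ξ`.
-/

open Matrix

/-- The standard basis vector `Eᵢ` of `ℝⁿ`. -/
noncomputable def E {n : ℕ} (i : Fin n) : Fin n → ℝ := Pi.single i 1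

section Wedge

variable {n : ℕ}

lemma wedge_swap (v w : Fin n → ℝ) : wedge v w = -wedge w v :=
  (neg_sub _ _).symm

lemma wedge_self (v : Fin n → ℝ) : wedge v v = 0 :=
  sub_self _

lemma wedge_eq_sum (v w : Fin n → ℝ) :
    wedge v w = ∑ i, ∑ j, (v i * w j) • wedge (E i) (E j) := by
  ext k l
  simp only [wedge, vecMulVec, Matrix.sub_apply, of_apply, E, Pi.single_apply, mul_ite, mul_one,
    mul_zero, of_sub_of, smul_of, Matrix.sum_apply, Pi.smul_apply, Pi.sub_apply, smul_eq_mul,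
    mul_sub, Finset.sum_sub_distrib, Finset.sum_ite_eq, Finset.mem_univ, ↓reduceIte,
    Finset.sum_ite_irrel, Finset.sum_const_zero, sub_right_inj]
  ring

lemma map_wedge_E_of_forall_lt (f : Matrix (Fin n) (Fin n) ℝ →ₗ[ℝ] Matrix (Fin n) (Fin n) ℝ)
    (c : Fin n → Fin n → ℝ) (hc : ∀ i j, c i j = c j i)
    (hf : ∀ i j, i < j → f (wedge (E i) (E j)) = c i j • wedge (E i) (E j)) (i j : Fin n) :
    f (wedge (E i) (E j)) = c i j • wedge (E i) (E j) := by
  rcases lt_trichotomy i j with h | rfl | h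
  · exact hf i j h
  · simp [wedge_self]
  · rw [wedge_swap, map_neg, hf j i h, hc, smul_neg]

lemma map_sum_smul_wedge_E (f : Matrix (Fin n) (Fin n) ℝ →ₗ[ℝ] Matrix (Fin n) (Fin n) ℝ)
    (c : Fin n → Fin n → ℝ) (hf : ∀ i j, f (wedge (E i) (E j)) = c i j • wedge (E i) (E j))
    (m : Fin n → Fin n → ℝ) :
    f (∑ i, ∑ j, m i j • wedge (E i) (E j)) = ∑ i, ∑ j, (m i j * c i j) • wedge (E i) (E j) := by
  simp only [map_sum, map_smul, hf, smul_smul]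

end Wedge

lemma inv_mul_inv_sub_inv_mul_eigenvalue {x y D : ℝ} (hx : x ≠ 0) (hy : y ≠ 0) (hD : D ≠ 0)
    (hxyD : D - x * y ≠ 0) : (x⁻¹ * y⁻¹ - 1 / D) * (x * y * D / (D - x * y)) = 1 := by
  field_simp

theorem stmt5_general {n : ℕ} (a : Fin n → ℝ) (D : ℝ) (hD : 0 < D)
    (ha : ∀ i, 0 < a i) (haD : ∀ i j, a i * a j < D)
    (Iop : Matrix (Fin n) (Fin n) ℝ →ₗ[ℝ] Matrix (Fin n) (Fin n) ℝ)
    (hI : ∀ i j : Fin n, i < j →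
      Iop (wedge (E i) (E j)) = (a i * a j * D / (D - a i * a j)) • wedge (E i) (E j)) :
    ∀ γ ξ : Fin n → ℝ,
      Iop (wedge (fun i => (a i)⁻¹ * γ i) (fun i => (a i)⁻¹ * ξ i)
            - (1 / D) • wedge γ ξ) = wedge γ ξ := by
  intro γ ξ
  have hI' := map_wedge_E_of_forall_lt Iop _ (fun i j => by rw [mul_comm (a i)]) hI
  have hinv (i j : Fin n) :
      ((a i)⁻¹ * (a j)⁻¹ - 1 / D) * (a i * a j * D / (D - a i * a j)) = 1 :=
    inv_mul_inv_sub_inv_mul_eigenvalue (ha i).ne' (ha j).ne' hD.ne' (sub_ne_zero.2 (haD i j).ne')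
  calc Iop (wedge (fun i => (a i)⁻¹ * γ i) (fun i => (a i)⁻¹ * ξ i) - (1 / D) • wedge γ ξ)
      = Iop (∑ i, ∑ j, (((a i)⁻¹ * (a j)⁻¹ - 1 / D) * (γ i * ξ j)) • wedge (E i) (E j)) := by
        simp only [wedge_eq_sum (fun i => _ * _), wedge_eq_sum γ ξ, Finset.smul_sum, smul_smul,
          ← Finset.sum_sub_distrib, ← sub_smul]
        congr 1
        refine Finset.sum_congr rfl fun i _ => Finset.sum_congr rfl fun j _ => ?_
        module
    _ = ∑ i, ∑ j, (γ i * ξ j) • wedge (E i) (E j) := by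
        rw [map_sum_smul_wedge_E Iop _ hI']
        simp only [mul_right_comm _ (γ _ * ξ _), hinv, one_mul]
    _ = wedge γ ξ := (wedge_eq_sum γ ξ).symm

theorem stmt5 {n : ℕ} (hn : 2 ≤ n) (a : Fin n → ℝ) (D : ℝ) (hD : 0 < D)
    (ha : ∀ i, 0 < a i) (haD : ∀ i j, a i * a j < D)
    (Iop : Matrix (Fin n) (Fin n) ℝ →ₗ[ℝ] Matrix (Fin n) (Fin n) ℝ)
    (hI : ∀ i j : Fin n, i < j →
      Iop (wedge (E i) (E j)) = (a i * a j * D / (D - a i * a j)) • wedge (E i) (E j)) :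
    ∀ γ ξ : Fin n → ℝ,
      Iop (wedge (fun i => (a i)⁻¹ * γ i) (fun i => (a i)⁻¹ * ξ i)
            - (1 / D) • wedge γ ξ) = wedge γ ξ :=
  stmt5_general a D hD ha haD Iop hI
end

section
/- Let A = diag(a₁,…,aₙ), aᵢ > 0, D > 0 and consider the vector field on {(γ,p) ∈ ℝ²ⁿ : γ ≠ 0} given by γ̇ = (1/D)p - ((p,γ)/(D(γ,A⁻¹γ)))A⁻¹γ + ((γ,Ap)/(D²(γ,A⁻¹γ)))γ - ((γ,γ)/(D²(γ,A⁻¹γ)))Ap, ṗ = ((p,A⁻¹γ)/(D(γ,A⁻¹γ)))p - ((p,p)/(D(γ,A⁻¹γ)))A⁻¹γ + ((p,Ap)/(D²(γ,A⁻¹γ)))γ - ((p,γ)/(D²(γ,A⁻¹γ)))Ap. Then the functions (γ,γ) and (γ,p) are first integrals of this vector field (their derivatives along the flow vanish at every point). -/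
/-!
Expanding the dot products, the terms with denominator `D²(γ, A⁻¹γ)` cancel in pairs by symmetry
of the dot product, and what remains is `c / D - c (γ, A⁻¹γ) / (D (γ, A⁻¹γ))` with `c = (p, γ)`
resp. `c = (p, p)`. This vanishes as soon as `(γ, A⁻¹γ) ≠ 0`, which holds for `γ ≠ 0` since `A⁻¹`
is positive definite.
-/

open Matrix

/-- The γ-component of the reduced Chaplygin sphere vector field. -/
noncomputable def Xg {n : ℕ} (a : Fin n → ℝ) (D : ℝ)
    (z : (Fin n → ℝ) × (Fin n → ℝ)) : Fin n → ℝ :=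
  let γ := z.1
  let p := z.2
  let Ainvγ : Fin n → ℝ := fun i => (a i)⁻¹ * γ i
  let Ap : Fin n → ℝ := fun i => a i * p i
  let s := γ ⬝ᵥ Ainvγ
  (1 / D) • p - ((p ⬝ᵥ γ) / (D * s)) • Ainvγ
    + ((γ ⬝ᵥ Ap) / (D ^ 2 * s)) • γ - ((γ ⬝ᵥ γ) / (D ^ 2 * s)) • Ap

/-- The p-component of the reduced Chaplygin sphere vector field. -/
noncomputable def Xp {n : ℕ} (a : Fin n → ℝ) (D : ℝ)
    (z : (Fin n → ℝ) × (Fin n → ℝ)) : Fin n → ℝ :=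
  let γ := z.1
  let p := z.2
  let Ainvγ : Fin n → ℝ := fun i => (a i)⁻¹ * γ i
  let Ap : Fin n → ℝ := fun i => a i * p i
  let s := γ ⬝ᵥ Ainvγ
  ((p ⬝ᵥ Ainvγ) / (D * s)) • p - ((p ⬝ᵥ p) / (D * s)) • Ainvγ
    + ((p ⬝ᵥ Ap) / (D ^ 2 * s)) • γ - ((p ⬝ᵥ γ) / (D ^ 2 * s)) • Ap

lemma div_mul_mul_cancel_right₀ {G₀ : Type*} [CommGroupWithZero G₀] {b c : G₀} (a : G₀)
    (hc : c ≠ 0) : a / (b * c) * c = a / b := by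
  rw [div_mul_eq_mul_div, mul_div_mul_right _ _ hc]

lemma dotProduct_inv_mul_pos {n : ℕ} {a γ : Fin n → ℝ} (ha : ∀ i, 0 < a i) (hγ : γ ≠ 0) :
    0 < γ ⬝ᵥ fun i => (a i)⁻¹ * γ i := by
  obtain ⟨j, hj⟩ := Function.ne_iff.1 hγ
  refine Finset.sum_pos' (fun i _ => ?_) ⟨j, Finset.mem_univ j, ?_⟩
  · rw [mul_left_comm]
    exact mul_nonneg (inv_pos.2 (ha i)).le (mul_self_nonneg _)
  · rw [mul_left_comm]
    exact mul_pos (inv_pos.2 (ha j)) (mul_self_pos.2 hj)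

section FirstIntegrals

variable {n : ℕ} (a : Fin n → ℝ) (D : ℝ) {z : (Fin n → ℝ) × (Fin n → ℝ)}

lemma dotProduct_Xg_eq_zero (hs : (z.1 ⬝ᵥ fun i => (a i)⁻¹ * z.1 i) ≠ 0) :
    z.1 ⬝ᵥ Xg a D z = 0 := by
  simp only [Xg, dotProduct_add, dotProduct_sub, dotProduct_smul, smul_eq_mul]
  rw [dotProduct_comm z.1 z.2]
  linear_combination -div_mul_mul_cancel_right₀ (b := D) (z.2 ⬝ᵥ z.1) hs

lemma Xg_dotProduct_add_dotProduct_Xp_eq_zero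
    (hs : (z.1 ⬝ᵥ fun i => (a i)⁻¹ * z.1 i) ≠ 0) :
    Xg a D z ⬝ᵥ z.2 + z.1 ⬝ᵥ Xp a D z = 0 := by
  simp only [Xg, Xp, dotProduct_add, dotProduct_sub, dotProduct_smul, add_dotProduct,
    sub_dotProduct, smul_dotProduct, smul_eq_mul]
  rw [dotProduct_comm z.1 z.2, dotProduct_comm (fun i => (a i)⁻¹ * z.1 i) z.2,
    dotProduct_comm (fun i => a i * z.2 i) z.2]
  linear_combination -div_mul_mul_cancel_right₀ (b := D) (z.2 ⬝ᵥ z.2) hs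

end FirstIntegrals

theorem stmt8_general {n : ℕ} (a : Fin n → ℝ) (ha : ∀ i, 0 < a i)
    (D : ℝ) (z : (Fin n → ℝ) × (Fin n → ℝ)) (hz : z.1 ≠ 0) :
    z.1 ⬝ᵥ Xg a D z = 0 ∧ Xg a D z ⬝ᵥ z.2 + z.1 ⬝ᵥ Xp a D z = 0 := by
  have hs := (dotProduct_inv_mul_pos ha hz).ne'
  exact ⟨dotProduct_Xg_eq_zero a D hs, Xg_dotProduct_add_dotProduct_Xp_eq_zero a D hs⟩

theorem stmt8 {n : ℕ} (hn : 2 ≤ n) (a : Fin n → ℝ) (ha : ∀ i, 0 < a i)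
    (D : ℝ) (hD : 0 < D) (z : (Fin n → ℝ) × (Fin n → ℝ)) (hz : z.1 ≠ 0) :
    z.1 ⬝ᵥ Xg a D z = 0 ∧ Xg a D z ⬝ᵥ z.2 + z.1 ⬝ᵥ Xp a D z = 0 :=
  stmt8_general a ha D z hz
end

section
/- At points of the constraint set {(γ,p) : (γ,γ) = 1, (γ,p) = 0}, the divergence of the reduced Chaplygin vector field X (given by γ̇ = (1/D)p - ((p,γ)/(D(γ,A⁻¹γ)))A⁻¹γ + ((γ,Ap)/(D²(γ,A⁻¹γ)))γ - ((γ,γ)/(D²(γ,A⁻¹γ)))Ap and the corresponding ṗ equation) satisfies div(X) = (n-2)·(γ, A⁻¹γ̇)/(γ,A⁻¹γ), i.e. div(X) = -μ̇/μ for μ(γ) = (γ,A⁻¹γ)^{-(n-2)/2}. Equivalently, the Liouville equation Σᵢ γ̇ᵢ ∂μ/∂γᵢ + μ·div(X) = 0 holds on the constraint set. -/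
open Matrix BigOperators

/-- The divergence `∑ᵢ ∂γ̇ᵢ/∂γᵢ + ∂ṗᵢ/∂pᵢ` of the vector field `(Xg, Xp)`. -/
noncomputable def divX {n : ℕ} (a : Fin n → ℝ) (D : ℝ)
    (z : (Fin n → ℝ) × (Fin n → ℝ)) : ℝ :=
  ∑ i : Fin n,
    (fderiv ℝ (fun w => Xg a D w i) z (Pi.single i 1, 0)
      + fderiv ℝ (fun w => Xp a D w i) z (0, Pi.single i 1))

/-!
Each component of `X` is a sum `∑ₖ cₖ • Vₖ` of ratios of quadratic forms `cₖ` times linear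
vector fields `Vₖ`, and `div (c • V) = dc(V) + c · div V`. The divergences of the linear parts
are the traces `n`, `0`, `tr A⁻¹`, `tr A`, and the directional derivatives of the `cₖ` are
explicit. On the constraint set every term containing `tr A⁻¹`, `tr A` or `A⁻²` carries the
factor `(γ, p) = 0`; what survives is `(n - 2)((p, A⁻¹γ)/D + (γ, Ap)/D²)/(γ, A⁻¹γ)`, and
`(p, A⁻¹γ)/D + (γ, Ap)/D²` is exactly `(γ, A⁻¹γ̇)`.
-/

section FrameDivergence

variable {E ι : Type*} [NormedAddCommGroup E] [NormedSpace ℝ E] [Fintype ι]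

noncomputable def frameDiv (e : ι → E) (F : E → ι → ℝ) (z : E) : ℝ :=
  ∑ i, fderiv ℝ (fun w => F w i) z (e i)

variable {e : ι → E} {F G V : E → ι → ℝ} {f : E → ℝ} {z : E}

theorem frameDiv_add (hF : DifferentiableAt ℝ F z) (hG : DifferentiableAt ℝ G z) :
    frameDiv e (fun w => F w + G w) z = frameDiv e F z + frameDiv e G z := by
  simp only [frameDiv, Pi.add_apply, ← Finset.sum_add_distrib]
  refine Finset.sum_congr rfl fun i _ => ?_
  rw [fderiv_fun_add (differentiableAt_pi.1 hF i) (differentiableAt_pi.1 hG i)]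
  rfl

theorem frameDiv_sub (hF : DifferentiableAt ℝ F z) (hG : DifferentiableAt ℝ G z) :
    frameDiv e (fun w => F w - G w) z = frameDiv e F z - frameDiv e G z := by
  simp only [frameDiv, Pi.sub_apply, ← Finset.sum_sub_distrib]
  refine Finset.sum_congr rfl fun i _ => ?_
  rw [fderiv_fun_sub (differentiableAt_pi.1 hF i) (differentiableAt_pi.1 hG i)]
  rfl

theorem frameDiv_smul (hf : DifferentiableAt ℝ f z) (hV : DifferentiableAt ℝ V z) :
    frameDiv e (fun w => f w • V w) z
      = fderiv ℝ f z (∑ i, V z i • e i) + f z * frameDiv e V z := by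
  simp only [frameDiv, Pi.smul_apply, smul_eq_mul, map_sum, map_smul, Finset.mul_sum,
    ← Finset.sum_add_distrib]
  refine Finset.sum_congr rfl fun i _ => ?_
  rw [fderiv_fun_mul hf (differentiableAt_pi.1 hV i)]
  simp only [_root_.add_apply, _root_.smul_apply, smul_eq_mul]
  ring

theorem frameDiv_continuousLinearMap (L : E →L[ℝ] ι → ℝ) :
    frameDiv e L z = ∑ i, L (e i) i := by
  refine Finset.sum_congr rfl fun i _ => ?_
  have hL : HasFDerivAt (fun w => L w i) ((ContinuousLinearMap.proj i).comp L) z :=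
    ((ContinuousLinearMap.proj i).comp L).hasFDerivAt
  rw [hL.fderiv]
  rfl

end FrameDivergence

section DotProduct

variable {E ι : Type*} [NormedAddCommGroup E] [NormedSpace ℝ E] [Fintype ι]
  {f g : E → ι → ℝ} {z : E}

theorem HasFDerivAt.dotProduct {f' g' : E →L[ℝ] ι → ℝ} (hf : HasFDerivAt f f' z)
    (hg : HasFDerivAt g g' z) :
    HasFDerivAt (fun w => f w ⬝ᵥ g w)
      (∑ i, (f z i • (ContinuousLinearMap.proj i).comp g'
        + g z i • (ContinuousLinearMap.proj i).comp f')) z :=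
  HasFDerivAt.fun_sum fun i _ => (hasFDerivAt_pi'.1 hf i).mul (hasFDerivAt_pi'.1 hg i)

@[fun_prop]
theorem DifferentiableAt.dotProduct (hf : DifferentiableAt ℝ f z)
    (hg : DifferentiableAt ℝ g z) : DifferentiableAt ℝ (fun w => f w ⬝ᵥ g w) z :=
  (hf.hasFDerivAt.dotProduct hg.hasFDerivAt).differentiableAt

theorem fderiv_dotProduct_apply (hf : DifferentiableAt ℝ f z) (hg : DifferentiableAt ℝ g z)
    (v : E) :
    fderiv ℝ (fun w => f w ⬝ᵥ g w) z v = fderiv ℝ f z v ⬝ᵥ g z + f z ⬝ᵥ fderiv ℝ g z v := by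
  rw [(hf.hasFDerivAt.dotProduct hg.hasFDerivAt).fderiv]
  simp only [_root_.sum_apply, _root_.add_apply, _root_.smul_apply,
    ContinuousLinearMap.comp_apply, ContinuousLinearMap.proj_apply, smul_eq_mul,
    _root_.dotProduct, ← Finset.sum_add_distrib]
  exact Finset.sum_congr rfl fun i _ => by ring

theorem fderiv_div_apply {f g : E → ℝ} (hf : DifferentiableAt ℝ f z)
    (hg : DifferentiableAt ℝ g z) (hz : g z ≠ 0) (v : E) :
    fderiv ℝ (fun w => f w / g w) z v
      = (fderiv ℝ f z v * g z - f z * fderiv ℝ g z v) / g z ^ 2 := by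
  have hdiv : HasFDerivAt (fun w => f w * (g w)⁻¹) _ z :=
    hf.hasFDerivAt.mul ((hasFDerivAt_inv hz).comp z hg.hasFDerivAt)
  simp only [div_eq_mul_inv, hdiv.fderiv]
  simp only [_root_.add_apply, _root_.smul_apply, ContinuousLinearMap.comp_apply,
    ContinuousLinearMap.toSpanSingleton_apply, smul_eq_mul]
  field_simp
  ring

variable (L₁ L₂ M₁ M₂ : E →L[ℝ] ι → ℝ) (k : ℝ)

theorem differentiableAt_dotProduct_div (hz : k * (M₁ z ⬝ᵥ M₂ z) ≠ 0) :
    DifferentiableAt ℝ (fun w => (L₁ w ⬝ᵥ L₂ w) / (k * (M₁ w ⬝ᵥ M₂ w))) z := by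
  have hN := L₁.differentiableAt.dotProduct L₂.differentiableAt (z := z)
  have hD := (M₁.differentiableAt.dotProduct M₂.differentiableAt (z := z)).const_mul k
  simp only [div_eq_mul_inv]
  exact hN.mul (hD.inv hz)

theorem fderiv_dotProduct_div_apply (hz : k * (M₁ z ⬝ᵥ M₂ z) ≠ 0) (v : E) :
    fderiv ℝ (fun w => (L₁ w ⬝ᵥ L₂ w) / (k * (M₁ w ⬝ᵥ M₂ w))) z v
      = ((L₁ v ⬝ᵥ L₂ z + L₁ z ⬝ᵥ L₂ v) * (M₁ z ⬝ᵥ M₂ z)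
          - (L₁ z ⬝ᵥ L₂ z) * (M₁ v ⬝ᵥ M₂ z + M₁ z ⬝ᵥ M₂ v)) / (k * (M₁ z ⬝ᵥ M₂ z) ^ 2) := by
  have hQ : ∀ N₁ N₂ : E →L[ℝ] ι → ℝ, DifferentiableAt ℝ (fun w => N₁ w ⬝ᵥ N₂ w) z :=
    fun N₁ N₂ => N₁.differentiableAt.dotProduct N₂.differentiableAt
  have hk : k ≠ 0 := left_ne_zero_of_mul hz
  rw [fderiv_div_apply (hQ L₁ L₂) ((hQ M₁ M₂).const_mul k) hz, fderiv_const_mul (hQ M₁ M₂),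
    _root_.smul_apply, fderiv_dotProduct_apply L₁.differentiableAt L₂.differentiableAt,
    fderiv_dotProduct_apply M₁.differentiableAt M₂.differentiableAt]
  simp only [ContinuousLinearMap.fderiv, smul_eq_mul]
  field_simp

end DotProduct

section WeightedDotProduct

variable {ι : Type*} [Fintype ι]

theorem dotProduct_mul_inv_mul {c : ι → ℝ} (hc : ∀ i, c i ≠ 0) (x y : ι → ℝ) :
    (fun i => c i * x i) ⬝ᵥ (fun i => (c i)⁻¹ * y i) = x ⬝ᵥ y :=
  Finset.sum_congr rfl fun i _ => by field_simp [hc i]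

theorem dotProduct_mul_swap (c x y : ι → ℝ) :
    (x ⬝ᵥ fun i => c i * y i) = y ⬝ᵥ fun i => c i * x i :=
  Finset.sum_congr rfl fun i _ => by ring

theorem dotProduct_inv_mul_self_pos {a x : ι → ℝ} (ha : ∀ i, 0 < a i) (hx : x ≠ 0) :
    0 < x ⬝ᵥ fun i => (a i)⁻¹ * x i := by
  obtain ⟨j, hj⟩ := Function.ne_iff.1 hx
  refine Finset.sum_pos' (fun i _ => ?_) ⟨j, Finset.mem_univ j, ?_⟩
  · rw [mul_left_comm]
    exact mul_nonneg (inv_nonneg.2 (ha i).le) (mul_self_nonneg _)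
  · rw [mul_left_comm]
    exact mul_pos (inv_pos.2 (ha j)) (mul_self_pos.2 hj)

end WeightedDotProduct

namespace Chaplygin

variable {n : ℕ}

local notation "Φ" n => (Fin n → ℝ) × (Fin n → ℝ)

local notation "πγ" => ContinuousLinearMap.fst ℝ (Fin _ → ℝ) (Fin _ → ℝ)

local notation "πp" => ContinuousLinearMap.snd ℝ (Fin _ → ℝ) (Fin _ → ℝ)

noncomputable def scaledFst (c : Fin n → ℝ) : (Φ n) →L[ℝ] Fin n → ℝ :=
  ContinuousLinearMap.pi fun i => c i • (ContinuousLinearMap.proj i).comp πγ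

noncomputable def scaledSnd (c : Fin n → ℝ) : (Φ n) →L[ℝ] Fin n → ℝ :=
  ContinuousLinearMap.pi fun i => c i • (ContinuousLinearMap.proj i).comp πp

@[simp]
theorem scaledFst_apply (c : Fin n → ℝ) (w : Φ n) : scaledFst c w = fun i => c i * w.1 i := rfl

@[simp]
theorem scaledSnd_apply (c : Fin n → ℝ) (w : Φ n) : scaledSnd c w = fun i => c i * w.2 i := rfl

def fstBasis (i : Fin n) : Φ n := (Pi.single i 1, 0)

def sndBasis (i : Fin n) : Φ n := (0, Pi.single i 1)

theorem divX_eq (a : Fin n → ℝ) (D : ℝ) (z : Φ n) :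
    divX a D z = frameDiv fstBasis (Xg a D) z + frameDiv sndBasis (Xp a D) z :=
  Finset.sum_add_distrib

theorem sum_smul_fstBasis (v : Fin n → ℝ) : ∑ i, v i • fstBasis i = (v, 0) := by
  ext j <;> simp [fstBasis, Prod.fst_sum, Prod.snd_sum, Pi.single_apply]

theorem sum_smul_sndBasis (v : Fin n → ℝ) : ∑ i, v i • sndBasis i = (0, v) := by
  ext j <;> simp [sndBasis, Prod.fst_sum, Prod.snd_sum, Pi.single_apply]

section Traces

variable {z : Φ n} (c : Fin n → ℝ)

theorem frameDiv_fstBasis_fst : frameDiv fstBasis (πγ : (Φ n) →L[ℝ] _) z = n := by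
  rw [frameDiv_continuousLinearMap]; simp [fstBasis]

theorem frameDiv_fstBasis_snd : frameDiv fstBasis (πp : (Φ n) →L[ℝ] _) z = 0 := by
  rw [frameDiv_continuousLinearMap]; simp [fstBasis]

theorem frameDiv_fstBasis_scaledFst : frameDiv fstBasis (scaledFst c) z = ∑ i, c i := by
  rw [frameDiv_continuousLinearMap]; simp [fstBasis]

theorem frameDiv_fstBasis_scaledSnd : frameDiv fstBasis (scaledSnd c) z = 0 := by
  rw [frameDiv_continuousLinearMap]; simp [fstBasis]

theorem frameDiv_sndBasis_fst : frameDiv sndBasis (πγ : (Φ n) →L[ℝ] _) z = 0 := by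
  rw [frameDiv_continuousLinearMap]; simp [sndBasis]

theorem frameDiv_sndBasis_snd : frameDiv sndBasis (πp : (Φ n) →L[ℝ] _) z = n := by
  rw [frameDiv_continuousLinearMap]; simp [sndBasis]

theorem frameDiv_sndBasis_scaledFst : frameDiv sndBasis (scaledFst c) z = 0 := by
  rw [frameDiv_continuousLinearMap]; simp [sndBasis]

theorem frameDiv_sndBasis_scaledSnd : frameDiv sndBasis (scaledSnd c) z = ∑ i, c i := by
  rw [frameDiv_continuousLinearMap]; simp [sndBasis]

end Traces

variable (a : Fin n → ℝ) (D : ℝ) (γ p : Fin n → ℝ)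

theorem Xg_eq :
    Xg a D = fun w =>
      (1 / D) • πp w - ((πp w ⬝ᵥ πγ w) / (D * (πγ w ⬝ᵥ scaledFst a⁻¹ w))) • scaledFst a⁻¹ w
        + ((πγ w ⬝ᵥ scaledSnd a w) / (D ^ 2 * (πγ w ⬝ᵥ scaledFst a⁻¹ w))) • πγ w
        - ((πγ w ⬝ᵥ πγ w) / (D ^ 2 * (πγ w ⬝ᵥ scaledFst a⁻¹ w))) • scaledSnd a w :=
  rfl

theorem Xp_eq :
    Xp a D = fun w =>
      ((πp w ⬝ᵥ scaledFst a⁻¹ w) / (D * (πγ w ⬝ᵥ scaledFst a⁻¹ w))) • πp w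
        - ((πp w ⬝ᵥ πp w) / (D * (πγ w ⬝ᵥ scaledFst a⁻¹ w))) • scaledFst a⁻¹ w
        + ((πp w ⬝ᵥ scaledSnd a w) / (D ^ 2 * (πγ w ⬝ᵥ scaledFst a⁻¹ w))) • πγ w
        - ((πp w ⬝ᵥ πγ w) / (D ^ 2 * (πγ w ⬝ᵥ scaledFst a⁻¹ w))) • scaledSnd a w :=
  rfl

variable {a D γ p}

theorem frameDiv_fstBasis_Xg (ha : ∀ i, a i ≠ 0) (hD : D ≠ 0)
    (hs : (γ ⬝ᵥ fun i => (a i)⁻¹ * γ i) ≠ 0) (hγγ : γ ⬝ᵥ γ = 1) (hγp : γ ⬝ᵥ p = 0) :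
    frameDiv fstBasis (Xg a D) (γ, p) =
      -(p ⬝ᵥ fun i => (a i)⁻¹ * γ i) / (D * (γ ⬝ᵥ fun i => (a i)⁻¹ * γ i))
        + (n - 3) * (γ ⬝ᵥ fun i => a i * p i) / (D ^ 2 * (γ ⬝ᵥ fun i => (a i)⁻¹ * γ i)) := by
  have h₁ : D * (πγ (γ, p) ⬝ᵥ scaledFst a⁻¹ (γ, p)) ≠ 0 := mul_ne_zero hD hs
  have h₂ : D ^ 2 * (πγ (γ, p) ⬝ᵥ scaledFst a⁻¹ (γ, p)) ≠ 0 :=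
    mul_ne_zero (pow_ne_zero 2 hD) hs
  rw [Xg_eq, frameDiv_sub, frameDiv_add, frameDiv_sub, frameDiv_smul, frameDiv_smul,
    frameDiv_smul, frameDiv_smul] <;> try fun_prop (disch := assumption)
  simp only [sum_smul_fstBasis, fderiv_fun_const, fderiv_dotProduct_div_apply _ _ _ _ _ h₁,
    fderiv_dotProduct_div_apply _ _ _ _ _ h₂, frameDiv_fstBasis_fst, frameDiv_fstBasis_snd,
    frameDiv_fstBasis_scaledFst, frameDiv_fstBasis_scaledSnd]
  simp only [ContinuousLinearMap.coe_fst', ContinuousLinearMap.coe_snd', scaledFst_apply,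
    scaledSnd_apply, Pi.inv_apply, Pi.zero_apply, _root_.zero_apply, mul_zero, ← Pi.zero_def,
    zero_dotProduct, dotProduct_zero, add_zero, zero_add]
  have hAinvAp : (fun i => (a i)⁻¹ * (a i * p i)) = p :=
    funext fun i => inv_mul_cancel_left₀ (ha i) _
  rw [dotProduct_mul_inv_mul ha, hAinvAp, dotProduct_comm p γ, hγp, hγγ,
    dotProduct_comm (fun i => a i * p i) γ]
  generalize (γ ⬝ᵥ fun i => (a i)⁻¹ * γ i) = s at hs ⊢
  field_simp
  ring

theorem frameDiv_sndBasis_Xp (hD : D ≠ 0) (hs : (γ ⬝ᵥ fun i => (a i)⁻¹ * γ i) ≠ 0)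
    (hγp : γ ⬝ᵥ p = 0) :
    frameDiv sndBasis (Xp a D) (γ, p) =
      (n - 1) * (p ⬝ᵥ fun i => (a i)⁻¹ * γ i) / (D * (γ ⬝ᵥ fun i => (a i)⁻¹ * γ i))
        + (γ ⬝ᵥ fun i => a i * p i) / (D ^ 2 * (γ ⬝ᵥ fun i => (a i)⁻¹ * γ i)) := by
  have h₁ : D * (πγ (γ, p) ⬝ᵥ scaledFst a⁻¹ (γ, p)) ≠ 0 := mul_ne_zero hD hs
  have h₂ : D ^ 2 * (πγ (γ, p) ⬝ᵥ scaledFst a⁻¹ (γ, p)) ≠ 0 :=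
    mul_ne_zero (pow_ne_zero 2 hD) hs
  rw [Xp_eq, frameDiv_sub, frameDiv_add, frameDiv_sub, frameDiv_smul, frameDiv_smul,
    frameDiv_smul, frameDiv_smul] <;> try fun_prop (disch := assumption)
  simp only [sum_smul_sndBasis, fderiv_dotProduct_div_apply _ _ _ _ _ h₁,
    fderiv_dotProduct_div_apply _ _ _ _ _ h₂, frameDiv_sndBasis_fst, frameDiv_sndBasis_snd,
    frameDiv_sndBasis_scaledFst, frameDiv_sndBasis_scaledSnd]
  simp only [ContinuousLinearMap.coe_fst', ContinuousLinearMap.coe_snd', scaledFst_apply,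
    scaledSnd_apply, Pi.inv_apply, Pi.zero_apply, mul_zero, ← Pi.zero_def, zero_dotProduct,
    dotProduct_zero, add_zero, sub_zero]
  rw [dotProduct_comm p γ, hγp, dotProduct_comm _ p, dotProduct_comm _ γ,
    dotProduct_mul_swap a p γ]
  generalize (γ ⬝ᵥ fun i => (a i)⁻¹ * γ i) = s at hs ⊢
  field_simp
  ring

theorem dotProduct_inv_mul_Xg (ha : ∀ i, a i ≠ 0) (hs : (γ ⬝ᵥ fun i => (a i)⁻¹ * γ i) ≠ 0)
    (hγγ : γ ⬝ᵥ γ = 1) (hγp : γ ⬝ᵥ p = 0) :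
    (γ ⬝ᵥ fun i => (a i)⁻¹ * Xg a D (γ, p) i) =
      (p ⬝ᵥ fun i => (a i)⁻¹ * γ i) / D + (γ ⬝ᵥ fun i => a i * p i) / D ^ 2 := by
  rw [dotProduct_mul_swap, dotProduct_comm, Xg_eq]
  simp only [dotProduct_sub, dotProduct_add, dotProduct_smul, smul_eq_mul,
    ContinuousLinearMap.coe_fst', ContinuousLinearMap.coe_snd', scaledFst_apply,
    scaledSnd_apply, Pi.inv_apply]
  rw [dotProduct_comm (fun i => (a i)⁻¹ * γ i) (fun i => a i * p i), dotProduct_mul_inv_mul ha,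
    dotProduct_comm p γ, hγp, dotProduct_comm _ γ, dotProduct_comm _ p, hγγ]
  generalize (γ ⬝ᵥ fun i => (a i)⁻¹ * γ i) = s at hs ⊢
  field_simp
  ring

end Chaplygin

open Chaplygin in
theorem stmt9_general {n : ℕ} (a : Fin n → ℝ) (ha : ∀ i, 0 < a i)
    (D : ℝ) (hD : 0 < D) (γ p : Fin n → ℝ)
    (hγγ : γ ⬝ᵥ γ = 1) (hγp : γ ⬝ᵥ p = 0) :
    divX a D (γ, p) =
      (n - 2 : ℝ) * (γ ⬝ᵥ fun i => (a i)⁻¹ * Xg a D (γ, p) i) /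
        (γ ⬝ᵥ fun i => (a i)⁻¹ * γ i) := by
  have ha₀ : ∀ i, a i ≠ 0 := fun i => (ha i).ne'
  have hγ : γ ≠ 0 := by
    rintro rfl
    simp at hγγ
  have hs := (dotProduct_inv_mul_self_pos ha hγ).ne'
  rw [divX_eq, frameDiv_fstBasis_Xg ha₀ hD.ne' hs hγγ hγp, frameDiv_sndBasis_Xp hD.ne' hs hγp,
    dotProduct_inv_mul_Xg ha₀ hs hγγ hγp]
  field_simp
  ring

theorem stmt9 {n : ℕ} (hn : 2 ≤ n) (a : Fin n → ℝ) (ha : ∀ i, 0 < a i)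
    (D : ℝ) (hD : 0 < D) (γ p : Fin n → ℝ)
    (hγγ : γ ⬝ᵥ γ = 1) (hγp : γ ⬝ᵥ p = 0) :
    divX a D (γ, p) =
      (n - 2 : ℝ) * (γ ⬝ᵥ fun i => (a i)⁻¹ * Xg a D (γ, p) i) /
        (γ ⬝ᵥ fun i => (a i)⁻¹ * γ i) :=
  stmt9_general a ha D hD γ p hγγ hγp
end

section
/- Consider the constrained Hamiltonian system on ℝ²ⁿ with H(γ,p̃) = ½(D(γ,A⁻¹γ)(p̃,p̃) - (p̃,Ap̃)) and constraints (γ,γ) = 1, (γ,p̃) = 0. The Lagrange multipliers λ, μ making the flow γ' = ∂H/∂p̃ - μγ, p̃' = -∂H/∂γ + 2λγ + μp̃ preserve both constraints are uniquely λ = (Ap̃,p̃)/(2(γ,γ)) and μ = (D(γ,A⁻¹γ)(p̃,γ) - (Ap̃,γ))/(γ,γ). The resulting equations are γ' = D(A⁻¹γ,γ)p̃ - Ap̃ + ((γ,Ap̃)/(γ,γ))γ - (D(γ,A⁻¹γ)(p̃,γ)/(γ,γ))γ and p̃' = -D(p̃,p̃)A⁻¹γ + ((p̃,Ap̃)/(γ,γ))γ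 - ((γ,Ap̃)/(γ,γ))p̃ + (D(γ,A⁻¹γ)(p̃,γ)/(γ,γ))p̃, and these preserve (γ,γ) and (γ,p̃). -/
/-!
Along `γ' = X - μγ`, `p' = F + 2λγ + μp` the derivatives of the constraints are
`(γ,γ') = (γ,X) - μ(γ,γ)` and `(γ',p) + (γ,p') = (X,p) + (γ,F) + 2λ(γ,γ)`, a triangular linear
system in `(λ, μ)` that is uniquely solvable as soon as `(γ,γ) ≠ 0`. For `X = ∂H/∂p̃`,
`F = -∂H/∂γ` the quartic terms `D(γ,A⁻¹γ)(p̃,p̃)` cancel in `(X,p̃) + (γ,F)`, leaving `-(Ap̃,p̃)`.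
-/

open Matrix

theorem constraints_preserved_iff {ι : Type*} [Fintype ι] {γ p X F : ι → ℝ} (hγ : γ ⬝ᵥ γ ≠ 0) (lam mu : ℝ) :
    (γ ⬝ᵥ (X - mu • γ) = 0 ∧ (X - mu • γ) ⬝ᵥ p + γ ⬝ᵥ (F + (2 * lam) • γ + mu • p) = 0) ↔
      lam = -(X ⬝ᵥ p + γ ⬝ᵥ F) / (2 * (γ ⬝ᵥ γ)) ∧ mu = γ ⬝ᵥ X / (γ ⬝ᵥ γ) := by
  simp only [dotProduct_sub, dotProduct_add, dotProduct_smul, sub_dotProduct, smul_dotProduct,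
    smul_eq_mul]
  rw [eq_div_iff (mul_ne_zero two_ne_zero hγ), eq_div_iff hγ]
  constructor <;> rintro ⟨h1, h2⟩ <;> constructor <;> linarith

theorem stmt10_general {n : ℕ} (a : Fin n → ℝ)
    (D : ℝ) (γ pt : Fin n → ℝ) (hγ : γ ≠ 0) :
    letI Ainvγ : Fin n → ℝ := fun i => (a i)⁻¹ * γ i
    letI Apt : Fin n → ℝ := fun i => a i * pt i
    -- the flow with multipliers λ, μ : γ' = ∂H/∂p̃ - μγ, p̃' = -∂H/∂γ + 2λγ + μp̃
    letI γ' : ℝ → ℝ → (Fin n → ℝ) := fun _lam mu =>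
      (D * (γ ⬝ᵥ Ainvγ)) • pt - Apt - mu • γ
    letI p' : ℝ → ℝ → (Fin n → ℝ) := fun lam mu =>
      -(D * (pt ⬝ᵥ pt)) • Ainvγ + (2 * lam) • γ + mu • pt
    letI lam0 : ℝ := (Apt ⬝ᵥ pt) / (2 * (γ ⬝ᵥ γ))
    letI mu0 : ℝ := (D * (γ ⬝ᵥ Ainvγ) * (pt ⬝ᵥ γ) - (Apt ⬝ᵥ γ)) / (γ ⬝ᵥ γ)
    -- uniqueness of the multipliers preserving both constraints
    (∀ lam mu : ℝ,
      (γ ⬝ᵥ γ' lam mu = 0 ∧ γ' lam mu ⬝ᵥ pt + γ ⬝ᵥ p' lam mu = 0) ↔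
        (lam = lam0 ∧ mu = mu0)) ∧
    -- the resulting equations
    γ' lam0 mu0 =
      (D * (γ ⬝ᵥ Ainvγ)) • pt - Apt + ((γ ⬝ᵥ Apt) / (γ ⬝ᵥ γ)) • γ
        - (D * (γ ⬝ᵥ Ainvγ) * (pt ⬝ᵥ γ) / (γ ⬝ᵥ γ)) • γ ∧
    p' lam0 mu0 =
      -(D * (pt ⬝ᵥ pt)) • Ainvγ + ((pt ⬝ᵥ Apt) / (γ ⬝ᵥ γ)) • γ
        - ((γ ⬝ᵥ Apt) / (γ ⬝ᵥ γ)) • pt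
        + (D * (γ ⬝ᵥ Ainvγ) * (pt ⬝ᵥ γ) / (γ ⬝ᵥ γ)) • pt ∧
    -- these preserve (γ,γ) and (γ,p̃)
    γ ⬝ᵥ γ' lam0 mu0 = 0 ∧ γ' lam0 mu0 ⬝ᵥ pt + γ ⬝ᵥ p' lam0 mu0 = 0 := by
  set Ainvγ : Fin n → ℝ := fun i => (a i)⁻¹ * γ i
  set Apt : Fin n → ℝ := fun i => a i * pt i
  beta_reduce
  have hγγ : γ ⬝ᵥ γ ≠ 0 := by simpa using hγ
  have hlam : Apt ⬝ᵥ pt / (2 * (γ ⬝ᵥ γ)) =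
      -(((D * (γ ⬝ᵥ Ainvγ)) • pt - Apt) ⬝ᵥ pt + γ ⬝ᵥ (-(D * (pt ⬝ᵥ pt)) • Ainvγ))
        / (2 * (γ ⬝ᵥ γ)) := by
    simp only [sub_dotProduct, smul_dotProduct, dotProduct_smul, smul_eq_mul,
      dotProduct_comm γ Ainvγ]
    ring
  have hmu : (D * (γ ⬝ᵥ Ainvγ) * (pt ⬝ᵥ γ) - Apt ⬝ᵥ γ) / (γ ⬝ᵥ γ) =
      γ ⬝ᵥ ((D * (γ ⬝ᵥ Ainvγ)) • pt - Apt) / (γ ⬝ᵥ γ) := by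
    simp only [dotProduct_sub, dotProduct_smul, smul_eq_mul, dotProduct_comm γ pt,
      dotProduct_comm γ Apt]
  refine ⟨fun lam mu => (constraints_preserved_iff hγγ lam mu).trans (by rw [hlam, hmu]), ?_, ?_,
    (constraints_preserved_iff hγγ _ _).2 ⟨hlam, hmu⟩⟩
  · simp only [dotProduct_comm Apt γ, sub_div, sub_smul]
    abel
  · simp only [dotProduct_comm Apt pt, dotProduct_comm Apt γ, sub_div, sub_smul]
    rw [← mul_div_assoc, mul_div_mul_left _ _ (two_ne_zero' ℝ)]
    module

theorem stmt10 {n : ℕ} (hn : 2 ≤ n) (a : Fin n → ℝ) (ha : ∀ i, 0 < a i)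
    (D : ℝ) (hD : 0 < D) (γ pt : Fin n → ℝ) (hγ : γ ≠ 0) :
    letI Ainvγ : Fin n → ℝ := fun i => (a i)⁻¹ * γ i
    letI Apt : Fin n → ℝ := fun i => a i * pt i
    -- the flow with multipliers λ, μ : γ' = ∂H/∂p̃ - μγ, p̃' = -∂H/∂γ + 2λγ + μp̃
    letI γ' : ℝ → ℝ → (Fin n → ℝ) := fun _lam mu =>
      (D * (γ ⬝ᵥ Ainvγ)) • pt - Apt - mu • γ
    letI p' : ℝ → ℝ → (Fin n → ℝ) := fun lam mu =>
      -(D * (pt ⬝ᵥ pt)) • Ainvγ + (2 * lam) • γ + mu • pt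
    letI lam0 : ℝ := (Apt ⬝ᵥ pt) / (2 * (γ ⬝ᵥ γ))
    letI mu0 : ℝ := (D * (γ ⬝ᵥ Ainvγ) * (pt ⬝ᵥ γ) - (Apt ⬝ᵥ γ)) / (γ ⬝ᵥ γ)
    -- uniqueness of the multipliers preserving both constraints
    (∀ lam mu : ℝ,
      (γ ⬝ᵥ γ' lam mu = 0 ∧ γ' lam mu ⬝ᵥ pt + γ ⬝ᵥ p' lam mu = 0) ↔
        (lam = lam0 ∧ mu = mu0)) ∧
    -- the resulting equations
    γ' lam0 mu0 =
      (D * (γ ⬝ᵥ Ainvγ)) • pt - Apt + ((γ ⬝ᵥ Apt) / (γ ⬝ᵥ γ)) • γ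
        - (D * (γ ⬝ᵥ Ainvγ) * (pt ⬝ᵥ γ) / (γ ⬝ᵥ γ)) • γ ∧
    p' lam0 mu0 =
      -(D * (pt ⬝ᵥ pt)) • Ainvγ + ((pt ⬝ᵥ Apt) / (γ ⬝ᵥ γ)) • γ
        - ((γ ⬝ᵥ Apt) / (γ ⬝ᵥ γ)) • pt
        + (D * (γ ⬝ᵥ Ainvγ) * (pt ⬝ᵥ γ) / (γ ⬝ᵥ γ)) • pt ∧
    -- these preserve (γ,γ) and (γ,p̃)
    γ ⬝ᵥ γ' lam0 mu0 = 0 ∧ γ' lam0 mu0 ⬝ᵥ pt + γ ⬝ᵥ p' lam0 mu0 = 0 :=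
  stmt10_general a D γ pt hγ
end

section
/- Along the constrained geodesic flow γ' = D(A⁻¹γ,γ)p̃ - Ap̃ + ((γ,Ap̃))γ - D(γ,A⁻¹γ)(p̃,γ)γ, p̃' = -D(p̃,p̃)A⁻¹γ + ((p̃,Ap̃))γ - ((γ,Ap̃))p̃ + D(γ,A⁻¹γ)(p̃,γ)p̃ restricted to the set {(γ,γ)=1, (γ,p̃)=0}, the three functions H = ½(D(γ,A⁻¹γ)(p̃,p̃) - (p̃,Ap̃)), K = D²(A⁻¹γ,γ)(p̃,p̃), and ℋ = (D²/2)(Ap̃,p̃) are first integrals, and they satisfy the linear relation H = K/(2D) - ℋ/D². -/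
/-!
Write `α = (γ, A⁻¹γ)`, `β = (p̃, p̃)`, `ν = (p̃, Ap̃)`. On the constraint `(γ, p̃) = 0` the flow gives
`α' = 2κα` and `β' = -2κβ` with `κ = D(p̃, A⁻¹γ) + (γ, Ap̃)`, and `ν' = 0`. Hence `αβ` and `ν` are
first integrals, and `H = ½(Dαβ - ν)`, `K = D²αβ`, `ℋ = (D²/2)ν` are combinations of them; the linear
relation between them is then an identity in `α`, `β`, `ν`.
-/

open Matrix

/-- γ-component of the constrained geodesic flow (on the set (γ,γ)=1, (γ,p̃)=0). -/
noncomputable def Yg {n : ℕ} (a : Fin n → ℝ) (D : ℝ) (γ pt : Fin n → ℝ) : Fin n → ℝ :=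
  let Ainvγ : Fin n → ℝ := fun i => (a i)⁻¹ * γ i
  let Apt : Fin n → ℝ := fun i => a i * pt i
  (D * (Ainvγ ⬝ᵥ γ)) • pt - Apt + (γ ⬝ᵥ Apt) • γ - (D * (γ ⬝ᵥ Ainvγ) * (pt ⬝ᵥ γ)) • γ

/-- p̃-component of the constrained geodesic flow. -/
noncomputable def Yp {n : ℕ} (a : Fin n → ℝ) (D : ℝ) (γ pt : Fin n → ℝ) : Fin n → ℝ :=
  let Ainvγ : Fin n → ℝ := fun i => (a i)⁻¹ * γ i
  let Apt : Fin n → ℝ := (fun i => a i * pt i)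
  (-(D * (pt ⬝ᵥ pt))) • Ainvγ + (pt ⬝ᵥ Apt) • γ - (γ ⬝ᵥ Apt) • pt
    + (D * (γ ⬝ᵥ Ainvγ) * (pt ⬝ᵥ γ)) • pt

noncomputable def Hfun {n : ℕ} (a : Fin n → ℝ) (D : ℝ) (γ pt : Fin n → ℝ) : ℝ :=
  (1 / 2) * (D * (γ ⬝ᵥ fun i => (a i)⁻¹ * γ i) * (pt ⬝ᵥ pt) - (pt ⬝ᵥ fun i => a i * pt i))

noncomputable def Kfun {n : ℕ} (a : Fin n → ℝ) (D : ℝ) (γ pt : Fin n → ℝ) : ℝ :=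
  D ^ 2 * ((fun i => (a i)⁻¹ * γ i) ⬝ᵥ γ) * (pt ⬝ᵥ pt)

noncomputable def calH {n : ℕ} (a : Fin n → ℝ) (D : ℝ) (pt : Fin n → ℝ) : ℝ :=
  (D ^ 2 / 2) * ((fun i => a i * pt i) ⬝ᵥ pt)

section DotProduct

variable {ι : Type*} [Fintype ι]

lemma hasDerivAt_dotProduct_s11 {f g : ℝ → ι → ℝ} {f' g' : ι → ℝ} {t : ℝ}
    (hf : ∀ i, HasDerivAt (fun s => f s i) (f' i) t)
    (hg : ∀ i, HasDerivAt (fun s => g s i) (g' i) t) :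
    HasDerivAt (fun s => f s ⬝ᵥ g s) (f' ⬝ᵥ g t + f t ⬝ᵥ g') t := by
  simpa only [dotProduct, Finset.sum_add_distrib] using
    HasDerivAt.fun_sum fun i _ => (hf i).fun_mul (hg i)

lemma dotProduct_mul_comm (c u v : ι → ℝ) :
    u ⬝ᵥ (fun i => c i * v i) = v ⬝ᵥ (fun i => c i * u i) :=
  Finset.sum_congr rfl fun i _ => by ring

lemma mul_dotProduct_inv_mul {c : ι → ℝ} (hc : ∀ i, c i ≠ 0) (u v : ι → ℝ) :
    (fun i => c i * u i) ⬝ᵥ (fun i => (c i)⁻¹ * v i) = u ⬝ᵥ v :=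
  Finset.sum_congr rfl fun i _ => by field_simp [hc i]

lemma hasDerivAt_dotProduct_mul_self (c : ι → ℝ) {f : ℝ → ι → ℝ} {f' : ι → ℝ} {t : ℝ}
    (hf : ∀ i, HasDerivAt (fun s => f s i) (f' i) t) :
    HasDerivAt (fun s => f s ⬝ᵥ fun i => c i * f s i) (2 * (f' ⬝ᵥ fun i => c i * f t i)) t := by
  refine (hasDerivAt_dotProduct_s11 hf fun i => (hf i).const_mul (c i)).congr_deriv ?_
  rw [dotProduct_mul_comm c (f t) f']
  ring

lemma hasDerivAt_dotProduct_self {f : ℝ → ι → ℝ} {f' : ι → ℝ} {t : ℝ}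
    (hf : ∀ i, HasDerivAt (fun s => f s i) (f' i) t) :
    HasDerivAt (fun s => f s ⬝ᵥ f s) (2 * (f' ⬝ᵥ f t)) t := by
  simpa only [Pi.one_apply, one_mul] using hasDerivAt_dotProduct_mul_self 1 hf

end DotProduct

section Flow

variable {n : ℕ} {a : Fin n → ℝ} {D : ℝ}

lemma Yg_dotProduct_inv_mul (ha : ∀ i, a i ≠ 0) {g q : Fin n → ℝ} (hgq : g ⬝ᵥ q = 0) :
    Yg a D g q ⬝ᵥ (fun i => (a i)⁻¹ * g i) =
      (D * (q ⬝ᵥ fun i => (a i)⁻¹ * g i) + (g ⬝ᵥ fun i => a i * q i)) *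
        (g ⬝ᵥ fun i => (a i)⁻¹ * g i) := by
  simp only [Yg, sub_dotProduct, add_dotProduct, smul_dotProduct, smul_eq_mul]
  rw [mul_dotProduct_inv_mul ha, dotProduct_comm q g, hgq,
    dotProduct_comm (fun i => (a i)⁻¹ * g i) g]
  ring

lemma Yp_dotProduct_self {g q : Fin n → ℝ} (hgq : g ⬝ᵥ q = 0) :
    Yp a D g q ⬝ᵥ q =
      -(D * (q ⬝ᵥ fun i => (a i)⁻¹ * g i) + (g ⬝ᵥ fun i => a i * q i)) * (q ⬝ᵥ q) := by
  simp only [Yp, sub_dotProduct, add_dotProduct, smul_dotProduct, smul_eq_mul]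
  rw [dotProduct_comm (fun i => (a i)⁻¹ * g i) q, dotProduct_comm q g, hgq]
  ring

lemma Yp_dotProduct_mul (ha : ∀ i, a i ≠ 0) {g q : Fin n → ℝ} (hgq : g ⬝ᵥ q = 0) :
    Yp a D g q ⬝ᵥ (fun i => a i * q i) = 0 := by
  simp only [Yp, sub_dotProduct, add_dotProduct, smul_dotProduct, smul_eq_mul]
  rw [← dotProduct_comm (fun i => a i * q i), mul_dotProduct_inv_mul ha,
    dotProduct_comm q g, hgq, dotProduct_mul_comm a g q]
  ring

lemma flow_conserves_invQuad_mul_sq (ha : ∀ i, a i ≠ 0) {γ pt : ℝ → Fin n → ℝ}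
    (hγp : ∀ t, γ t ⬝ᵥ pt t = 0)
    (hγ : ∀ t i, HasDerivAt (fun s => γ s i) (Yg a D (γ t) (pt t) i) t)
    (hp : ∀ t i, HasDerivAt (fun s => pt s i) (Yp a D (γ t) (pt t) i) t) (t : ℝ) :
    HasDerivAt (fun s => (γ s ⬝ᵥ fun i => (a i)⁻¹ * γ s i) * (pt s ⬝ᵥ pt s)) 0 t := by
  refine ((hasDerivAt_dotProduct_mul_self _ (hγ t)).mul
    (hasDerivAt_dotProduct_self (hp t))).congr_deriv ?_
  rw [Yg_dotProduct_inv_mul ha (hγp t), Yp_dotProduct_self (hγp t)]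
  ring

lemma flow_conserves_quad (ha : ∀ i, a i ≠ 0) {γ pt : ℝ → Fin n → ℝ}
    (hγp : ∀ t, γ t ⬝ᵥ pt t = 0)
    (hp : ∀ t i, HasDerivAt (fun s => pt s i) (Yp a D (γ t) (pt t) i) t) (t : ℝ) :
    HasDerivAt (fun s => pt s ⬝ᵥ fun i => a i * pt s i) 0 t := by
  simpa only [Yp_dotProduct_mul ha (hγp t), mul_zero] using
    hasDerivAt_dotProduct_mul_self a (hp t)

lemma Kfun_eq (a : Fin n → ℝ) (D : ℝ) (g q : Fin n → ℝ) :
    Kfun a D g q = D ^ 2 * ((g ⬝ᵥ fun i => (a i)⁻¹ * g i) * (q ⬝ᵥ q)) := by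
  rw [Kfun, dotProduct_comm]
  ring

lemma calH_eq (a : Fin n → ℝ) (D : ℝ) (q : Fin n → ℝ) :
    calH a D q = D ^ 2 / 2 * (q ⬝ᵥ fun i => a i * q i) := by
  rw [calH, dotProduct_comm]

lemma Hfun_eq (a : Fin n → ℝ) (D : ℝ) (g q : Fin n → ℝ) :
    Hfun a D g q = 1 / 2 * (D * ((g ⬝ᵥ fun i => (a i)⁻¹ * g i) * (q ⬝ᵥ q)) -
      (q ⬝ᵥ fun i => a i * q i)) := by
  rw [Hfun, mul_assoc D]

end Flow

theorem stmt11_general {n : ℕ} (a : Fin n → ℝ) (ha : ∀ i, 0 < a i)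
    (D : ℝ) (hD : 0 < D) (γ pt : ℝ → Fin n → ℝ)
    (hγp : ∀ t, γ t ⬝ᵥ pt t = 0)
    (hγ : ∀ t i, HasDerivAt (fun s => γ s i) (Yg a D (γ t) (pt t) i) t)
    (hp : ∀ t i, HasDerivAt (fun s => pt s i) (Yp a D (γ t) (pt t) i) t) :
    (∀ t, HasDerivAt (fun s => Hfun a D (γ s) (pt s)) 0 t) ∧
    (∀ t, HasDerivAt (fun s => Kfun a D (γ s) (pt s)) 0 t) ∧
    (∀ t, HasDerivAt (fun s => calH a D (pt s)) 0 t) ∧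
    (∀ g q : Fin n → ℝ, g ⬝ᵥ g = 1 → g ⬝ᵥ q = 0 →
      Hfun a D g q = Kfun a D g q / (2 * D) - calH a D q / D ^ 2) := by
  have ha₀ : ∀ i, a i ≠ 0 := fun i => (ha i).ne'
  have hαβ := flow_conserves_invQuad_mul_sq ha₀ hγp hγ hp
  have hν := flow_conserves_quad ha₀ hγp hp
  refine ⟨fun t => ?_, fun t => ?_, fun t => ?_, fun g q _ _ => ?_⟩
  · simpa only [Hfun_eq, mul_zero, sub_zero] using
      (((hαβ t).const_mul D).fun_sub (hν t)).const_mul (1 / 2 : ℝ)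
  · simpa only [Kfun_eq, mul_zero] using (hαβ t).const_mul (D ^ 2)
  · simpa only [calH_eq, mul_zero] using (hν t).const_mul (D ^ 2 / 2)
  · rw [Hfun_eq, Kfun_eq, calH_eq]
    field_simp

theorem stmt11 {n : ℕ} (hn : 2 ≤ n) (a : Fin n → ℝ) (ha : ∀ i, 0 < a i)
    (D : ℝ) (hD : 0 < D) (γ pt : ℝ → Fin n → ℝ)
    (hγγ : ∀ t, γ t ⬝ᵥ γ t = 1) (hγp : ∀ t, γ t ⬝ᵥ pt t = 0)
    (hγ : ∀ t i, HasDerivAt (fun s => γ s i) (Yg a D (γ t) (pt t) i) t)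
    (hp : ∀ t i, HasDerivAt (fun s => pt s i) (Yp a D (γ t) (pt t) i) t) :
    (∀ t, HasDerivAt (fun s => Hfun a D (γ s) (pt s)) 0 t) ∧
    (∀ t, HasDerivAt (fun s => Kfun a D (γ s) (pt s)) 0 t) ∧
    (∀ t, HasDerivAt (fun s => calH a D (pt s)) 0 t) ∧
    (∀ g q : Fin n → ℝ, g ⬝ᵥ g = 1 → g ⬝ᵥ q = 0 →
      Hfun a D g q = Kfun a D g q / (2 * D) - calH a D q / D ^ 2) :=
  stmt11_general a ha D hD γ pt hγp hγ hp
end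

section
/- For n = 3, define I₁ = a₂a₃D/(D-a₂a₃), I₂ = a₃a₁D/(D-a₃a₁), I₃ = a₁a₂D/(D-a₁a₂) where 0 < aᵢaⱼ < D. Then the map (a₁,a₂,a₃) ↦ (I₁,I₂,I₃) is inverted by aᵢ = √(I₁I₂I₃D)·(Iᵢ + D)/(Iᵢ√((I₁+D)(I₂+D)(I₃+D))) for i = 1,2,3. -/
/-!
With `f q = q * D / (D - q)` we have `Iᵢ = f (aⱼ aₖ)` and `f q + D = D ^ 2 / (D - q)`, hence
`(f q + D) / f q = D / q`, and the factors `D - qᵢ` cancel from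
`f q₁ * f q₂ * f q₃ * D / ((f q₁ + D) * (f q₂ + D) * (f q₃ + D)) = q₁ * q₂ * q₃ / D ^ 2`.
For `qᵢ = aⱼ aₖ` the right side is `(a₁ a₂ a₃ / D) ^ 2`, so the claimed expression for `aᵢ`
equals `(a₁ a₂ a₃ / D) * (D / (aⱼ aₖ)) = aᵢ`.
-/

namespace TripleInversion

-- `(q⁻¹ - D⁻¹)⁻¹`, in the form in which it appears in the `Iᵢ`.
noncomputable def invSubInv (D q : ℝ) : ℝ := q * D / (D - q)

variable {D q q₁ q₂ q₃ : ℝ}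

lemma invSubInv_add_self (h : D - q ≠ 0) : invSubInv D q + D = D ^ 2 / (D - q) := by
  unfold invSubInv
  field_simp
  ring

lemma invSubInv_add_self_div (hD : D ≠ 0) (hq : q ≠ 0) (h : D - q ≠ 0) :
    (invSubInv D q + D) / invSubInv D q = D / q := by
  rw [invSubInv_add_self h, invSubInv]
  field_simp

lemma sqrt_prod_invSubInv_div_sqrt_prod_add (hD : 0 < D)
    (hd : 0 < (D - q₁) * (D - q₂) * (D - q₃)) :
    √(invSubInv D q₁ * invSubInv D q₂ * invSubInv D q₃ * D) /
        √((invSubInv D q₁ + D) * (invSubInv D q₂ + D) * (invSubInv D q₃ + D)) =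
      √(q₁ * q₂ * q₃) / D := by
  have h₁ : D - q₁ ≠ 0 := by rintro h; simp [h] at hd
  have h₂ : D - q₂ ≠ 0 := by rintro h; simp [h] at hd
  have h₃ : D - q₃ ≠ 0 := by rintro h; simp [h] at hd
  have hprod : (invSubInv D q₁ + D) * (invSubInv D q₂ + D) * (invSubInv D q₃ + D) =
      D ^ 6 / ((D - q₁) * (D - q₂) * (D - q₃)) := by
    rw [invSubInv_add_self h₁, invSubInv_add_self h₂, invSubInv_add_self h₃]
    field_simp
  have hratio : invSubInv D q₁ * invSubInv D q₂ * invSubInv D q₃ * D /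
        ((invSubInv D q₁ + D) * (invSubInv D q₂ + D) * (invSubInv D q₃ + D)) =
      q₁ * q₂ * q₃ / D ^ 2 := by
    rw [hprod]
    unfold invSubInv
    field_simp
  rw [← Real.sqrt_div' _ (by rw [hprod]; positivity), hratio, Real.sqrt_div' _ (by positivity),
    Real.sqrt_sq hD.le]

lemma eq_sqrt_mul_div_of {a c I X Y : ℝ} (hD : D ≠ 0) (hq : q ≠ 0) (hXY : √X / √Y = c / D)
    (hI : (I + D) / I = D / q) (ha : a * q = c) :
    a = √X * (I + D) / (I * √Y) := by
  rw [show √X * (I + D) / (I * √Y) = √X / √Y * ((I + D) / I) by ring, hXY, hI, ← ha]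
  field_simp

end TripleInversion

open TripleInversion in
theorem stmt13 (a₁ a₂ a₃ D : ℝ) (ha₁ : 0 < a₁) (ha₂ : 0 < a₂) (ha₃ : 0 < a₃)
    (hD : 0 < D) (h₁₂ : a₁ * a₂ < D) (h₂₃ : a₂ * a₃ < D) (h₃₁ : a₃ * a₁ < D) :
    letI I₁ : ℝ := a₂ * a₃ * D / (D - a₂ * a₃)
    letI I₂ : ℝ := a₃ * a₁ * D / (D - a₃ * a₁)
    letI I₃ : ℝ := a₁ * a₂ * D / (D - a₁ * a₂)
    a₁ = Real.sqrt (I₁ * I₂ * I₃ * D) * (I₁ + D) /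
          (I₁ * Real.sqrt ((I₁ + D) * (I₂ + D) * (I₃ + D))) ∧
    a₂ = Real.sqrt (I₁ * I₂ * I₃ * D) * (I₂ + D) /
          (I₂ * Real.sqrt ((I₁ + D) * (I₂ + D) * (I₃ + D))) ∧
    a₃ = Real.sqrt (I₁ * I₂ * I₃ * D) * (I₃ + D) /
          (I₃ * Real.sqrt ((I₁ + D) * (I₂ + D) * (I₃ + D))) := by
  have hd₁ := sub_pos.2 h₂₃
  have hd₂ := sub_pos.2 h₃₁
  have hd₃ := sub_pos.2 h₁₂
  have hratio : √(invSubInv D (a₂ * a₃) * invSubInv D (a₃ * a₁) * invSubInv D (a₁ * a₂) * D) /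
      √((invSubInv D (a₂ * a₃) + D) * (invSubInv D (a₃ * a₁) + D) *
        (invSubInv D (a₁ * a₂) + D)) =
      a₁ * a₂ * a₃ / D := by
    rw [sqrt_prod_invSubInv_div_sqrt_prod_add hD (by positivity),
      show a₂ * a₃ * (a₃ * a₁) * (a₁ * a₂) = (a₁ * a₂ * a₃) ^ 2 by ring,
      Real.sqrt_sq (by positivity)]
  refine ⟨?_, ?_, ?_⟩ <;> refine eq_sqrt_mul_div_of hD.ne' ?_ hratio
    (invSubInv_add_self_div hD.ne' ?_ (by positivity)) ?_ <;> first | positivity | ring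
end
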